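/- Let D be a symmetric n×n real matrix. The set of solutions of the minimization of Tr(DX) over symmetric matrices X with 0 ⪯ X ⪯ I_n is exactly the set of X satisfying P⁻ ⪯ X ⪯ P⁰, where P⁻ is the orthogonal projection onto the span of eigenvectors of D with negative eigenvalues and P⁰ is the orthogonal projection onto the span of eigenvectors of D with non-positive eigenvalues. In particular, the optimal value equals the sum of the negative eigenvalues of D. -/

import Mathlib

open Matrix BigOperators

/-- Orthogonal projection onto the span of eigenvectors of `D` with negative eigenvalues. -/
noncomputable def projNeg {n : ℕ} {D : Matrix (Fin n) (Fin n) ℝ} (hD : D.IsHermitian) :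
    Matrix (Fin n) (Fin n) ℝ :=
  (hD.eigenvectorUnitary : Matrix (Fin n) (Fin n) ℝ) *
    (Matrix.diagonal fun i => if hD.eigenvalues i < 0 then (1 : ℝ) else 0) *
    (star (hD.eigenvectorUnitary : Matrix (Fin n) (Fin n) ℝ))

/-- Orthogonal projection onto the span of eigenvectors of `D` with non-positive eigenvalues. -/
noncomputable def projNonpos {n : ℕ} {D : Matrix (Fin n) (Fin n) ℝ} (hD : D.IsHermitian) :
    Matrix (Fin n) (Fin n) ℝ :=
  (hD.eigenvectorUnitary : Matrix (Fin n) (Fin n) ℝ) *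
    (Matrix.diagonal fun i => if hD.eigenvalues i ≤ 0 then (1 : ℝ) else 0) *
    (star (hD.eigenvectorUnitary : Matrix (Fin n) (Fin n) ℝ))

section Aux

variable {n : ℕ}

lemma psd_diag_nonneg {M : Matrix (Fin n) (Fin n) ℝ} (hM : M.PosSemidef) (i : Fin n) :
    0 ≤ M i i := by
  have h := hM.dotProduct_mulVec_nonneg (Pi.single i 1)
  simpa [dotProduct, Matrix.mulVec, Pi.single_apply, Finset.mul_sum,
    Finset.sum_ite_eq, Finset.sum_ite_eq'] using h

open scoped MatrixOrder in
lemma psd_col_zero {M : Matrix (Fin n) (Fin n) ℝ} (hM : M.PosSemidef) {k : Fin n}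
    (h : M k k = 0) (j : Fin n) : M j k = 0 := by
  have hS : CFC.sqrt M * CFC.sqrt M = M := CFC.sqrt_mul_sqrt_self M hM.nonneg
  have hSh : (CFC.sqrt M).IsHermitian := (CFC.sqrt_nonneg M).posSemidef.1
  have hcol : ∀ l, CFC.sqrt M l k = 0 := by
    have hsum : ∑ l, CFC.sqrt M l k * CFC.sqrt M l k = 0 := by
      have hkk : (CFC.sqrt M * CFC.sqrt M) k k = 0 := by rw [hS]; exact h
      rw [Matrix.mul_apply] at hkk
      rw [← hkk]
      refine Finset.sum_congr rfl fun l _ => ?_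
      have := hSh.apply k l
      simp only [star_trivial] at this
      rw [← this]
    intro l
    have h0 : ∀ l ∈ Finset.univ, (0:ℝ) ≤ CFC.sqrt M l k * CFC.sqrt M l k :=
      fun l _ => mul_self_nonneg _
    exact mul_self_eq_zero.mp
      ((Finset.sum_eq_zero_iff_of_nonneg h0).mp hsum l (Finset.mem_univ l))
  have hjk := congrFun (congrFun hS j) k
  rw [Matrix.mul_apply] at hjk
  rw [← hjk]
  exact Finset.sum_eq_zero fun l _ => by rw [hcol l, mul_zero]

lemma conj_psd_iff {U : Matrix (Fin n) (Fin n) ℝ} (hU' : star U * U = 1)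
    (M : Matrix (Fin n) (Fin n) ℝ) : (U * M * star U).PosSemidef ↔ M.PosSemidef := by
  constructor
  · intro h
    have h2 : ((star U)ᴴ.conjTranspose * (U * M * star U) * U).PosSemidef := by
      simpa [Matrix.star_eq_conjTranspose] using h.conjTranspose_mul_mul_same U
    have key : star U * (U * M * star U) * U = M := by
      have : star U * (U * M * star U) * U = star U * U * M * (star U * U) := by
        simp only [Matrix.mul_assoc]
      rw [this, hU', Matrix.one_mul, Matrix.mul_one]
    have h3 : (star U * (U * M * star U) * U).PosSemidef := by
      simpa [Matrix.star_eq_conjTranspose] using h.conjTranspose_mul_mul_same U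
    rwa [key] at h3
  · intro h
    simpa [Matrix.star_eq_conjTranspose] using h.mul_mul_conjTranspose_same U

/-- The key diagonal-frame lemma. -/
lemma key_diag {ev : Fin n → ℝ} {Y : Matrix (Fin n) (Fin n) ℝ}
    (hY : Y.PosSemidef) (hY1 : ((1 : Matrix (Fin n) (Fin n) ℝ) - Y).PosSemidef) :
    (∑ i, if ev i < 0 then ev i else 0) ≤ ∑ i, ev i * Y i i ∧
      ((∑ i, ev i * Y i i) = (∑ i, if ev i < 0 then ev i else 0) ↔
        (Y - Matrix.diagonal fun i => if ev i < 0 then (1:ℝ) else 0).PosSemidef ∧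
        ((Matrix.diagonal fun i => if ev i ≤ 0 then (1:ℝ) else 0) - Y).PosSemidef) := by
  have hd0 : ∀ i, 0 ≤ Y i i := fun i => psd_diag_nonneg hY i
  have hd1 : ∀ i, Y i i ≤ 1 := by
    intro i
    have h := psd_diag_nonneg hY1 i
    simp only [Matrix.sub_apply, Matrix.one_apply_eq] at h
    linarith
  have hle : ∀ i ∈ Finset.univ, (if ev i < 0 then ev i else 0) ≤ ev i * Y i i := by
    intro i _
    split
    · next h => nlinarith [hd1 i]
    · next h => exact mul_nonneg (le_of_not_gt h) (hd0 i)
  refine ⟨Finset.sum_le_sum hle, ?_, ?_⟩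
  · -- equality implies the two PSD conditions
    intro heq
    have hterm : ∀ i ∈ Finset.univ, ev i * Y i i = (if ev i < 0 then ev i else 0) :=
      fun i hi => ((Finset.sum_eq_sum_iff_of_le hle).mp heq.symm i hi).symm
    have hY1diag : ∀ i, ev i < 0 → Y i i = 1 := by
      intro i hi
      have h := hterm i (Finset.mem_univ i)
      rw [if_pos hi] at h
      have h2 : ev i * Y i i = ev i * 1 := by rw [h, mul_one]
      have := mul_left_cancel₀ (ne_of_lt hi) h2
      linarith
    have hY0diag : ∀ i, 0 < ev i → Y i i = 0 := by
      intro i hi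
      have h := hterm i (Finset.mem_univ i)
      rw [if_neg (not_lt.mpr hi.le)] at h
      rcases mul_eq_zero.mp h with h' | h'
      · exact absurd h' (ne_of_gt hi)
      · exact h'
    have hcolE : ∀ j k, ev k < 0 → Y j k = if j = k then (1:ℝ) else 0 := by
      intro j k hk
      have h0 : ((1 : Matrix (Fin n) (Fin n) ℝ) - Y) k k = 0 := by
        simp [Matrix.sub_apply, Matrix.one_apply_eq, hY1diag k hk]
      have h1 := psd_col_zero hY1 h0 j
      simp only [Matrix.sub_apply, sub_eq_zero] at h1
      rw [← h1, Matrix.one_apply]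
    have hcolF : ∀ j k, 0 < ev k → Y j k = 0 :=
      fun j k hk => psd_col_zero hY (hY0diag k hk) j
    set E : Matrix (Fin n) (Fin n) ℝ :=
      Matrix.diagonal fun i => if ev i < 0 then (1:ℝ) else 0 with hEdef
    set F : Matrix (Fin n) (Fin n) ℝ :=
      Matrix.diagonal fun i => if ev i ≤ 0 then (1:ℝ) else 0 with hFdef
    have hEh : E.IsHermitian := Matrix.isHermitian_diagonal _
    have hFh : F.IsHermitian := Matrix.isHermitian_diagonal _
    have hYh : Y.IsHermitian := hY.1
    have hYE : Y * E = E := by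
      ext j k
      rw [hEdef, Matrix.mul_diagonal, Matrix.diagonal_apply]
      by_cases hk : ev k < 0
      · rw [if_pos hk, mul_one, hcolE j k hk]
        by_cases hjk : j = k
        · subst hjk; simp [hk]
        · simp [hjk]
      · rw [if_neg hk, mul_zero]
        by_cases hjk : j = k
        · subst hjk; simp [hk]
        · simp [hjk]
    have hEY : E * Y = E := by
      calc E * Y = (Yᴴ * Eᴴ)ᴴ := by
            rw [Matrix.conjTranspose_mul, Matrix.conjTranspose_conjTranspose,
              Matrix.conjTranspose_conjTranspose]
        _ = (Y * E)ᴴ := by rw [hYh.eq, hEh.eq]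
        _ = Eᴴ := by rw [hYE]
        _ = E := hEh.eq
    have hEE : E * E = E := by
      rw [hEdef, Matrix.diagonal_mul_diagonal]
      refine congrArg Matrix.diagonal (funext fun i => ?_)
      split <;> simp
    have hYF : Y * F = Y := by
      ext j k
      rw [hFdef, Matrix.mul_diagonal]
      by_cases hk : ev k ≤ 0
      · rw [if_pos hk, mul_one]
      · rw [if_neg hk, mul_zero, hcolF j k (lt_of_not_ge hk)]
    have hFY : F * Y = Y := by
      calc F * Y = (Yᴴ * Fᴴ)ᴴ := by
            rw [Matrix.conjTranspose_mul, Matrix.conjTranspose_conjTranspose,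
              Matrix.conjTranspose_conjTranspose]
        _ = (Y * F)ᴴ := by rw [hYh.eq, hFh.eq]
        _ = Yᴴ := by rw [hYF]
        _ = Y := hYh.eq
    have hFF : F * F = F := by
      rw [hFdef, Matrix.diagonal_mul_diagonal]
      refine congrArg Matrix.diagonal (funext fun i => ?_)
      split <;> simp
    constructor
    · -- (Y - E).PosSemidef
      have hsub : (1 - E) * Y * (1 - E) = Y - E := by
        rw [Matrix.sub_mul, Matrix.one_mul, hEY, Matrix.mul_sub, Matrix.mul_one,
          Matrix.sub_mul, hYE, hEE, sub_self, sub_zero]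
      have h1Eh : (1 - E)ᴴ = 1 - E := by
        rw [Matrix.conjTranspose_sub, Matrix.conjTranspose_one, hEh.eq]
      have := hY.mul_mul_conjTranspose_same (1 - E)
      rwa [h1Eh, hsub] at this
    · -- (F - Y).PosSemidef
      have hsub : F * (1 - Y) * F = F - Y := by
        rw [Matrix.mul_sub, Matrix.mul_one, hFY, Matrix.sub_mul, hFF, hYF]
      have := hY1.mul_mul_conjTranspose_same F
      rwa [hFh.eq, hsub] at this
  · -- the two PSD conditions imply equality
    rintro ⟨h1, h2⟩
    have hge : ∀ i, (if ev i < 0 then (1:ℝ) else 0) ≤ Y i i := by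
      intro i
      have h := psd_diag_nonneg h1 i
      simp only [Matrix.sub_apply, Matrix.diagonal_apply_eq] at h
      linarith
    have hle2 : ∀ i, Y i i ≤ (if ev i ≤ 0 then (1:ℝ) else 0) := by
      intro i
      have h := psd_diag_nonneg h2 i
      simp only [Matrix.sub_apply, Matrix.diagonal_apply_eq] at h
      linarith
    refine Finset.sum_congr rfl fun i _ => ?_
    rcases lt_trichotomy (ev i) 0 with h | h | h
    · have e1 := hge i; have e2 := hle2 i
      rw [if_pos h] at e1
      rw [if_pos h.le] at e2
      have hYi : Y i i = 1 := le_antisymm e2 e1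
      rw [if_pos h, hYi, mul_one]
    · simp [h]
    · have e1 := hge i; have e2 := hle2 i
      rw [if_neg (not_lt.mpr h.le)] at e1
      rw [if_neg (not_le.mpr h)] at e2
      have hYi : Y i i = 0 := le_antisymm e2 e1
      rw [hYi, mul_zero, if_neg (not_lt.mpr h.le)]

end Aux

/-- the solutions of `min Tr(DX)` over `0 ⪯ X ⪯ I` are exactly the `X` with
`P⁻ ⪯ X ⪯ P⁰`, and the optimal value is the sum of the negative eigenvalues of `D`. -/
theorem stmt0 {n : ℕ} (D : Matrix (Fin n) (Fin n) ℝ) (hD : D.IsHermitian) :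
    (projNeg hD).PosSemidef ∧ (1 - projNeg hD).PosSemidef ∧
    (D * projNeg hD).trace = (∑ i, if hD.eigenvalues i < 0 then hD.eigenvalues i else 0) ∧
    ∀ X : Matrix (Fin n) (Fin n) ℝ, X.PosSemidef → (1 - X).PosSemidef →
      ((D * projNeg hD).trace ≤ (D * X).trace ∧
        ((D * X).trace = (D * projNeg hD).trace ↔
          (X - projNeg hD).PosSemidef ∧ (projNonpos hD - X).PosSemidef)) := by
  classical
  set U : Matrix (Fin n) (Fin n) ℝ := (hD.eigenvectorUnitary : Matrix (Fin n) (Fin n) ℝ)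
    with hUdef
  set ev : Fin n → ℝ := hD.eigenvalues with hevdef
  have hU : U * star U = 1 := Matrix.mem_unitaryGroup_iff.mp hD.eigenvectorUnitary.2
  have hU' : star U * U = 1 := Matrix.mem_unitaryGroup_iff'.mp hD.eigenvectorUnitary.2
  set E : Matrix (Fin n) (Fin n) ℝ :=
    Matrix.diagonal fun i => if ev i < 0 then (1:ℝ) else 0 with hEdef
  set F : Matrix (Fin n) (Fin n) ℝ :=
    Matrix.diagonal fun i => if ev i ≤ 0 then (1:ℝ) else 0 with hFdef
  have hPdef : projNeg hD = U * E * star U := rfl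
  have hQdef : projNonpos hD = U * F * star U := rfl
  have hspec : D = U * Matrix.diagonal ev * star U := by
    have h := hD.spectral_theorem
    rwa [show RCLike.ofReal ∘ hD.eigenvalues = ev from by
      funext i; simp [hevdef, RCLike.ofReal_real_eq_id]] at h
  -- trace transfer
  have htrace : ∀ X : Matrix (Fin n) (Fin n) ℝ,
      (D * X).trace = ∑ i, ev i * (star U * X * U) i i := by
    intro X
    conv_lhs => rw [hspec]
    rw [Matrix.mul_assoc, Matrix.mul_assoc, Matrix.trace_mul_comm U, Matrix.mul_assoc]
    rw [show (Matrix.diagonal ev * (star U * X * U)).trace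
        = ∑ i, ev i * (star U * X * U) i i from by
      simp [Matrix.trace, Matrix.diag, Matrix.diagonal_mul]]
  have hconjP : star U * projNeg hD * U = E := by
    rw [hPdef]
    have : star U * (U * E * star U) * U = star U * U * E * (star U * U) := by
      simp only [Matrix.mul_assoc]
    rw [this, hU', Matrix.one_mul, Matrix.mul_one]
  -- trace of D * projNeg
  have htrP : (D * projNeg hD).trace = ∑ i, if ev i < 0 then ev i else 0 := by
    rw [htrace, hconjP]
    refine Finset.sum_congr rfl fun i _ => ?_
    rw [hEdef, Matrix.diagonal_apply_eq]
    split <;> simp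
  have hEpsd : E.PosSemidef := by
    rw [hEdef]
    exact Matrix.posSemidef_diagonal_iff.mpr fun i => by split <;> norm_num
  have h1Epsd : ((1 : Matrix (Fin n) (Fin n) ℝ) - E).PosSemidef := by
    have h1 : (1 : Matrix (Fin n) (Fin n) ℝ) - E
        = Matrix.diagonal fun i => 1 - (if ev i < 0 then (1:ℝ) else 0) := by
      rw [hEdef, ← Matrix.diagonal_one, Matrix.diagonal_sub]
    rw [h1]
    exact Matrix.posSemidef_diagonal_iff.mpr fun i => by split <;> norm_num
  refine ⟨?_, ?_, htrP, ?_⟩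
  · rw [hPdef]
    exact (conj_psd_iff hU' E).mpr hEpsd
  · have h2 : U * (1 - E) * star U = 1 - U * E * star U := by
      rw [Matrix.mul_sub, Matrix.mul_one, Matrix.sub_mul, hU]
    rw [hPdef, ← h2]
    exact (conj_psd_iff hU' (1 - E)).mpr h1Epsd
  · intro X hX hX1
    set Y : Matrix (Fin n) (Fin n) ℝ := star U * X * U with hYdef
    have hXY : U * Y * star U = X := by
      rw [hYdef]
      have : U * (star U * X * U) * star U = U * star U * X * (U * star U) := by
        simp only [Matrix.mul_assoc]
      rw [this, hU, Matrix.one_mul, Matrix.mul_one]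
    have hYpsd : Y.PosSemidef := (conj_psd_iff hU' Y).mp (by rwa [hXY])
    have hY1psd : ((1 : Matrix (Fin n) (Fin n) ℝ) - Y).PosSemidef := by
      have h2 : star U * (1 - X) * U = 1 - Y := by
        rw [Matrix.mul_sub, Matrix.mul_one, Matrix.sub_mul, hU', hYdef]
      rw [← h2]
      have h3 : U * (star U * (1 - X) * U) * star U = 1 - X := by
        have : U * (star U * (1 - X) * U) * star U
            = U * star U * (1 - X) * (U * star U) := by simp only [Matrix.mul_assoc]
        rw [this, hU, Matrix.one_mul, Matrix.mul_one]
      exact (conj_psd_iff hU' _).mp (by rwa [h3])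
    obtain ⟨hineq, hiff⟩ := key_diag (ev := ev) hYpsd hY1psd
    have htrX : (D * X).trace = ∑ i, ev i * Y i i := htrace X
    constructor
    · rw [htrX, htrP]; exact hineq
    · rw [htrX, htrP, hiff]
      have hXP : X - projNeg hD = U * (Y - E) * star U := by
        rw [Matrix.mul_sub, Matrix.sub_mul, hXY, hPdef]
      have hQX : projNonpos hD - X = U * (F - Y) * star U := by
        rw [Matrix.mul_sub, Matrix.sub_mul, hXY, hQdef]
      rw [hXP, hQX, conj_psd_iff hU', conj_psd_iff hU']
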